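/- arXiv:math/0405306 — 7 statements merged into one kernel-verified Lean document; each statement's English description precedes it below -/
import Mathlib

section
/- If P and Q are coprime integers, then the greatest common divisor of P·(P²−3Q)·(P²−Q) and (P²−2Q)·(P⁴−4P²Q+Q²) divides 2. -/
/-!
The two polynomials are the Lucas sequence terms `U₆(P, Q)` and `V₆(P, Q)`. Explicit
polynomial combinations of them equal `2 Q⁵` and `2 P⁹`, so their gcd divides both; since `P` and
`Q` are coprime, so are `P⁹` and `Q⁵`, and the gcd divides `2`.
-/

theorem IsCoprime.dvd_of_dvd_mul_pow {R : Type*} [CommRing R] {P Q c d : R} (h : IsCoprime P Q)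
    {m n : ℕ} (hP : d ∣ c * P ^ m) (hQ : d ∣ c * Q ^ n) : d ∣ c := by
  obtain ⟨a, b, hab⟩ := h.pow (m := m) (n := n)
  have hc : a * (c * P ^ m) + b * (c * Q ^ n) = c := by linear_combination c * hab
  exact hc ▸ dvd_add (hP.mul_left a) (hQ.mul_left b)

theorem dvd_two_mul_pow_five_of_dvd_lucasU₆_of_dvd_lucasV₆ {R : Type*} [CommRing R] {P Q d : R}
    (hA : d ∣ P * (P ^ 2 - 3 * Q) * (P ^ 2 - Q))
    (hB : d ∣ (P ^ 2 - 2 * Q) * (P ^ 4 - 4 * P ^ 2 * Q + Q ^ 2)) : d ∣ 2 * Q ^ 5 := by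
  convert dvd_add (hA.mul_left (P ^ 5 - 5 * P ^ 3 * Q + 5 * P * Q ^ 2))
    (hB.mul_left (-P ^ 4 + 3 * P ^ 2 * Q - Q ^ 2)) using 1
  ring

theorem dvd_two_mul_pow_nine_of_dvd_lucasU₆_of_dvd_lucasV₆ {R : Type*} [CommRing R] {P Q d : R}
    (hA : d ∣ P * (P ^ 2 - 3 * Q) * (P ^ 2 - Q))
    (hB : d ∣ (P ^ 2 - 2 * Q) * (P ^ 4 - 4 * P ^ 2 * Q + Q ^ 2)) : d ∣ 2 * P ^ 9 := by
  convert dvd_add (hA.mul_left (43 * P ^ 4 - 116 * P ^ 2 * Q + 28 * Q ^ 2))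
    (hB.mul_left (-41 * P ^ 3 + 42 * P * Q)) using 1
  ring

theorem stmt_2 (P Q : ℤ) (h : IsCoprime P Q) :
    Int.gcd (P * (P ^ 2 - 3 * Q) * (P ^ 2 - Q))
        ((P ^ 2 - 2 * Q) * (P ^ 4 - 4 * P ^ 2 * Q + Q ^ 2)) ∣ 2 := by
  have hA := Int.gcd_dvd_left (P * (P ^ 2 - 3 * Q) * (P ^ 2 - Q))
    ((P ^ 2 - 2 * Q) * (P ^ 4 - 4 * P ^ 2 * Q + Q ^ 2))
  have hB := Int.gcd_dvd_right (P * (P ^ 2 - 3 * Q) * (P ^ 2 - Q))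
    ((P ^ 2 - 2 * Q) * (P ^ 4 - 4 * P ^ 2 * Q + Q ^ 2))
  exact_mod_cast h.dvd_of_dvd_mul_pow (dvd_two_mul_pow_nine_of_dvd_lucasU₆_of_dvd_lucasV₆ hA hB)
    (dvd_two_mul_pow_five_of_dvd_lucasU₆_of_dvd_lucasV₆ hA hB)
end

section
/- If P and Q are coprime integers such that U_12(P,Q) is a nonzero perfect square, then there exists δ ∈ {1, −1, 2, −2} and nonzero integers a, b with P·(P²−3Q)·(P²−Q) = δ·a² and (P²−2Q)·(P⁴−4P²Q+Q²) = δ·b². -/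
/-!
`U₁₂ = U₆ · V₆` with `U₆ = P(P² - 3Q)(P² - Q)` and `V₆ = (P² - 2Q)(P⁴ - 4P²Q + Q²)`.
If a product of two nonzero integers is a square, each factor is `±gcd · square`, with the same
sign. Here the gcd divides 2: it divides `V₆² - (P² - 4Q)U₆² = 4Q⁶` and is prime to `Q`
(as `U₆ ≡ P⁵ mod Q`), and `4 ∤ V₆`, as a check modulo 4 shows.
-/

def lucasU (P Q : ℤ) : ℕ → ℤ
  | 0 => 0
  | 1 => 1
  | (n + 2) => P * lucasU P Q (n + 1) - Q * lucasU P Q n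

namespace Int

theorem exists_sign_mul_sq_of_isCoprime {A B c : ℤ} (hA : A ≠ 0) (hB : B ≠ 0)
    (hcop : IsCoprime A B) (hAB : A * B = c ^ 2) :
    ∃ ε : ℤ, (ε = 1 ∨ ε = -1) ∧ ∃ a b : ℤ, A = ε * a ^ 2 ∧ B = ε * b ^ 2 := by
  obtain ⟨a, ha⟩ := Int.sq_of_isCoprime hcop hAB
  obtain ⟨b, hb⟩ := Int.sq_of_isCoprime hcop.symm (by rwa [mul_comm])
  have hab : 0 < (a * b) ^ 2 := by
    refine (sq_nonneg _).lt_of_ne' fun h0 => ?_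
    rcases mul_eq_zero.1 (pow_eq_zero_iff two_ne_zero |>.1 h0) with rfl | rfl
    · exact hA (by simpa using ha)
    · exact hB (by simpa using hb)
  rcases ha with rfl | rfl <;> rcases hb with rfl | rfl
  · exact ⟨1, by simp, a, b, by ring, by ring⟩
  · nlinarith [sq_nonneg c]
  · nlinarith [sq_nonneg c]
  · exact ⟨-1, by simp, a, b, by ring, by ring⟩

theorem exists_sign_mul_gcd_mul_sq_of_mul_eq_sq {A B c : ℤ} (hA : A ≠ 0) (hB : B ≠ 0)
    (hAB : A * B = c ^ 2) :
    ∃ ε : ℤ, (ε = 1 ∨ ε = -1) ∧ ∃ a b : ℤ, A = ε * A.gcd B * a ^ 2 ∧ B = ε * A.gcd B * b ^ 2 := by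
  have hpos := Int.gcd_pos_of_ne_zero_left B hA
  obtain ⟨A', B', hcop, hA', hB'⟩ := Int.exists_gcd_one hpos
  set g : ℤ := (A.gcd B : ℤ)
  have hg : g ≠ 0 := by positivity
  obtain ⟨c', rfl⟩ : g ∣ c := by
    rw [← Int.pow_dvd_pow_iff two_ne_zero, ← hAB, hA', hB']
    exact ⟨A' * B', by ring⟩
  have hA'B' : A' * B' = c' ^ 2 := by
    apply mul_left_cancel₀ (pow_ne_zero 2 hg)
    rw [← mul_pow, ← hAB, hA', hB']
    ring
  obtain ⟨ε, hε, a, b, ha, hb⟩ := exists_sign_mul_sq_of_isCoprime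
    (by rintro rfl; simp_all) (by rintro rfl; simp_all)
    (Int.isCoprime_iff_gcd_eq_one.2 hcop) hA'B'
  exact ⟨ε, hε, a, b, by rw [hA', ha]; ring, by rw [hB', hb]; ring⟩

end Int

theorem lucasU_twelve (P Q : ℤ) :
    lucasU P Q 12 = P * (P ^ 2 - 3 * Q) * (P ^ 2 - Q) *
      ((P ^ 2 - 2 * Q) * (P ^ 4 - 4 * P ^ 2 * Q + Q ^ 2)) := by
  simp only [lucasU]
  ring

theorem not_four_dvd_of_isCoprime {P Q : ℤ} (h : IsCoprime P Q) :
    ¬ 4 ∣ (P ^ 2 - 2 * Q) * (P ^ 4 - 4 * P ^ 2 * Q + Q ^ 2) := by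
  obtain ⟨u, v, huv⟩ := h
  have mod_four : ∀ x y u v : ZMod 4, u * x + v * y = 1 →
      (x ^ 2 - 2 * y) * (x ^ 4 - 4 * x ^ 2 * y + y ^ 2) ≠ 0 := by
    decide
  intro h4
  have := (ZMod.intCast_zmod_eq_zero_iff_dvd _ 4).2 h4
  push_cast at this
  exact mod_four P Q u v (by exact_mod_cast congrArg (Int.cast : ℤ → ZMod 4) huv) this

theorem gcd_dvd_two_of_isCoprime {P Q : ℤ} (h : IsCoprime P Q) :
    Int.gcd (P * (P ^ 2 - 3 * Q) * (P ^ 2 - Q))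
      ((P ^ 2 - 2 * Q) * (P ^ 4 - 4 * P ^ 2 * Q + Q ^ 2)) ∣ 2 := by
  set A := P * (P ^ 2 - 3 * Q) * (P ^ 2 - Q)
  set B := (P ^ 2 - 2 * Q) * (P ^ 4 - 4 * P ^ 2 * Q + Q ^ 2)
  set g := A.gcd B
  have hAQ : IsCoprime A Q := by
    have := (h.pow_left (m := 5)).add_mul_left_left (3 * P * Q - 4 * P ^ 3)
    rwa [show P ^ 5 + Q * (3 * P * Q - 4 * P ^ 3) = A by ring] at this
  have hgQ : IsCoprime (g : ℤ) Q := hAQ.of_isCoprime_of_dvd_left (Int.gcd_dvd_left A B)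
  have hg4 : g ∣ 4 := by
    have : (g : ℤ) ∣ Q ^ 6 * 4 := by
      rw [show Q ^ 6 * 4 = B ^ 2 - (P ^ 2 - 4 * Q) * A ^ 2 by ring]
      exact dvd_sub (Dvd.dvd.pow (Int.gcd_dvd_right A B) two_ne_zero)
        (Dvd.dvd.mul_left (Dvd.dvd.pow (Int.gcd_dvd_left A B) two_ne_zero) _)
    exact_mod_cast hgQ.pow_right.dvd_of_dvd_mul_left this
  have hg_ne_four : g ≠ 4 := by
    intro hg
    have hgB : (g : ℤ) ∣ B := Int.gcd_dvd_right A B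
    rw [hg] at hgB
    exact not_four_dvd_of_isCoprime h hgB
  have := Nat.le_of_dvd (by norm_num) hg4
  interval_cases g <;> simp_all

theorem stmt_3 (P Q : ℤ) (h : IsCoprime P Q) (hne : lucasU P Q 12 ≠ 0)
    (hsq : IsSquare (lucasU P Q 12)) :
    ∃ δ ∈ ({1, -1, 2, -2} : Set ℤ), ∃ a b : ℤ, a ≠ 0 ∧ b ≠ 0 ∧
      P * (P ^ 2 - 3 * Q) * (P ^ 2 - Q) = δ * a ^ 2 ∧
      (P ^ 2 - 2 * Q) * (P ^ 4 - 4 * P ^ 2 * Q + Q ^ 2) = δ * b ^ 2 := by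
  obtain ⟨r, hr⟩ := hsq
  rw [lucasU_twelve] at hne hr
  obtain ⟨hA, hB⟩ := mul_ne_zero_iff.1 hne
  obtain ⟨ε, hε, a, b, ha, hb⟩ :=
    Int.exists_sign_mul_gcd_mul_sq_of_mul_eq_sq hA hB (hr.trans (sq r).symm)
  have hg := (Nat.dvd_prime Nat.prime_two).1 (gcd_dvd_two_of_isCoprime h)
  refine ⟨_, ?_, a, b, ?_, ?_, ha, hb⟩
  · rcases hε with rfl | rfl <;> rcases hg with hg | hg <;> simp [hg]
  · rintro rfl; exact hA (by simpa using ha)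
  · rintro rfl; exact hB (by simpa using hb)
end

section
/- The equation (1 − x)(x² − 4x + 1) = −2 y² has no solution in rational numbers x, y with y ≠ 0. -/
set_option maxRecDepth 10000
set_option maxHeartbeats 1000000

private lemma zA : ∀ a f b : ZMod 16, b ^ 2 ≠ (a+a) ^ 4 - 4 * (a+a) ^ 2 * (2*f+1) ^ 2 - 8 * (2*f+1) ^ 4 := by decide
private lemma zB : ∀ k i j : ZMod 8, (2*k+1) ^ 2 ≠ 3*(2*i+1)^4 + 2*(2*i+1)^2*(2*j+1)^2 + (2*j+1)^4 := by decide
private lemma zC : ∀ k i j : ZMod 8, (2*k+1) ^ 2 ≠ 3*(2*i+1)^4 + 2*(2*i+1)^2*(j+j)^2 + (j+j)^4 := by decide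
private lemma zD : ∀ m j t : ZMod 8, t ^ 2 ≠ 8*m^4 - (2*j+1)^4 - 4*m^2*(2*j+1)^2 := by decide
private lemma zE : ∀ k e b : ZMod 8, b ^ 2 ≠ -(2*k+1)^4 - 4*(2*k+1)^2*e^2 + 8*e^4 := by decide
private lemma zF : ∀ a f b : ZMod 16, b ^ 2 ≠ -(a+a)^4 - 4*(a+a)^2*(2*f+1)^2 + 8*(2*f+1)^4 := by decide
private lemma zP : ∀ k e c : ZMod 2, (c+c) ^ 2 ≠ (2*k+1)^4 - 4*(2*k+1)^2*e^2 - 8*e^4 := by decide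

private lemma pow4_of_coprime {a b c : ℤ} (h : IsCoprime a b) (heq : a * b = c ^ 4) :
    ∃ a0 : ℤ, a = a0 ^ 4 ∨ a = -a0 ^ 4 := by
  have h' : IsUnit (GCDMonoid.gcd a b) := by
    rw [← Int.coe_gcd, Int.isCoprime_iff_gcd_eq_one.mp h, Int.ofNat_one]
    exact isUnit_one
  obtain ⟨d, ⟨u, hu⟩⟩ := exists_associated_pow_of_mul_eq_pow h' heq
  use d
  rw [← hu]
  cases' Int.units_eq_one_or u with hu' hu' <;>
    · rw [hu']
      simp

private lemma one_le_sq {s : ℤ} (h : s ≠ 0) : 1 ≤ s ^ 2 := by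
  have h1 := Int.one_le_abs h
  have h2 : 1 * 1 ≤ |s| * |s| := mul_le_mul h1 h1 (by norm_num) (by positivity)
  rw [abs_mul_abs_self] at h2
  linarith [sq s ▸ h2, (sq s).symm, (pow_two s)]

private lemma one_le_pow4 {s : ℤ} (h : s ≠ 0) : 1 ≤ s ^ 4 := by
  have h1 := one_le_sq (pow_ne_zero 2 h)
  have h2 : (s ^ 2) ^ 2 = s ^ 4 := by ring
  linarith [h2 ▸ h1]

private lemma coprime_two_of_odd {n : ℤ} (h : Odd n) : IsCoprime (2 : ℤ) n := by
  obtain ⟨k, rfl⟩ := h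
  exact ⟨-k, 1, by ring⟩

private lemma gcd_descend {a b a' b' : ℤ} (h : Int.gcd a b = 1) (ha : a' ∣ a) (hb : b' ∣ b) :
    Int.gcd a' b' = 1 :=
  Nat.dvd_one.mp (by
    have : (Int.gcd a' b' : ℤ) ∣ (Int.gcd a b : ℤ) :=
      Int.dvd_coe_gcd ((Int.gcd_dvd_left _ _).trans ha) ((Int.gcd_dvd_right _ _).trans hb)
    rw [h] at this
    exact_mod_cast this)

private lemma sq_dvd_le_three {g c : ℕ} (hc0 : 0 < c) (hc : c ≤ 3) (h : g^2 ∣ c) : g = 1 := by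
  have hle := Nat.le_of_dvd hc0 h
  have hg0 : g ≠ 0 := by rintro rfl; simp at h; omega
  by_contra hne
  have h2 : 2 ≤ g := by omega
  have h4 : 2 ^ 2 ≤ g ^ 2 := Nat.pow_le_pow_left h2 2
  omega

/-- Core of the descent, after WLOG `3 ∣ u`. -/
private lemma lemC_core (N : ℕ)
    (ih : ∀ a e b : ℤ, e ≠ 0 → e.natAbs ≤ N → Int.gcd a e = 1 →
      b ^ 2 = a ^ 4 - 4 * a ^ 2 * e ^ 2 - 8 * e ^ 4 → False)
    (a e u v : ℤ) (he : e ≠ 0) (hE : e.natAbs ≤ N + 1) (hguv : Int.gcd u v = 1)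
    (h3 : (3:ℤ) ∣ u) (huv : u * v = 3 * e ^ 4) (hsum : u + v = a ^ 2 - 2 * e ^ 2)
    (ha : Odd a) : False := by
  obtain ⟨u₀, rfl⟩ := h3
  have huv0 : u₀ * v = e ^ 4 := by
    have h3' : 3 * (u₀ * v) = 3 * e ^ 4 := by linear_combination huv
    linarith
  have hg0 : IsCoprime u₀ v :=
    Int.isCoprime_iff_gcd_eq_one.mpr (gcd_descend hguv (dvd_mul_left u₀ 3) dvd_rfl)
  obtain ⟨s, hs⟩ := pow4_of_coprime (c := e) hg0 huv0
  obtain ⟨t, ht⟩ := pow4_of_coprime (c := e) hg0.symm (by linear_combination huv0)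
  have he4pos : (0:ℤ) < e ^ 4 := by positivity
  have hst4nn : (0:ℤ) ≤ s ^ 4 * t ^ 4 := by positivity
  rcases hs with hs | hs <;> rcases ht with ht | ht
  -- case u₀ = s^4, v = t^4 : main case
  · have hst4 : s ^ 4 * t ^ 4 = e ^ 4 := by rw [hs, ht] at huv0; linarith
    have he2 : e ^ 2 = s ^ 2 * t ^ 2 := by
      have h0 : (e ^ 2 - s ^ 2 * t ^ 2) * (e ^ 2 + s ^ 2 * t ^ 2) = 0 := by
        linear_combination -hst4
      rcases mul_eq_zero.mp h0 with h0 | h0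
      · linarith
      · have hnn : (0:ℤ) ≤ s ^ 2 * t ^ 2 := by positivity
        linarith [one_le_sq he]
    have hs0 : s ≠ 0 := by
      rintro rfl
      rw [show ((0:ℤ)^2*t^2) = 0 by ring] at he2
      exact he (pow_eq_zero_iff two_ne_zero |>.mp he2)
    have ht0 : t ≠ 0 := by
      rintro rfl
      rw [show (s^2*(0:ℤ)^2) = 0 by ring] at he2
      exact he (pow_eq_zero_iff two_ne_zero |>.mp he2)
    have key : a ^ 2 = 3 * s ^ 4 + 2 * s ^ 2 * t ^ 2 + t ^ 4 := by
      rw [hs, ht] at hsum; linear_combination -hsum + 2 * he2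
    have hgst : Int.gcd s t = 1 := by
      apply gcd_descend (Int.isCoprime_iff_gcd_eq_one.mp hg0)
      · rw [hs]; exact dvd_pow_self s (by norm_num)
      · rw [ht]; exact dvd_pow_self t (by norm_num)
    obtain ⟨k, hak⟩ := ha
    rcases Int.even_or_odd s with hse | hso
    · rcases Int.even_or_odd t with hte | hto
      · -- both even: contradicts coprimality
        obtain ⟨i, rfl⟩ := hse; obtain ⟨j, rfl⟩ := hte
        have h2 : (2:ℤ) ∣ (Int.gcd (i+i) (j+j) : ℤ) :=
          Int.dvd_coe_gcd ⟨i, by ring⟩ ⟨j, by ring⟩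
        rw [hgst] at h2; norm_num at h2
      · -- s even, t odd : the descent case
        obtain ⟨s₁, hs1⟩ := hse
        have hs1v : s = 2 * s₁ := by omega
        have hs10 : s₁ ≠ 0 := by rintro rfl; exact hs0 (by omega)
        have haodd : Odd a := ⟨k, hak⟩
        have hA2 : |a| ^ 2 = a ^ 2 := sq_abs a
        have hAodd : Odd |a| := by
          rcases abs_choice a with h | h <;> rw [h]
          · exact haodd
          · exact haodd.neg
        have ha0 : a ≠ 0 := by rintro rfl; omega
        have hApos : 0 < |a| := abs_pos.mpr ha0
        have key2 : |a| ^ 2 = (s ^ 2 + t ^ 2) ^ 2 + 2 * s ^ 4 := by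
          rw [hA2]; linear_combination key
        have hwodd : Odd (s ^ 2 + t ^ 2) := by
          obtain ⟨j, htj⟩ := hto
          exact Even.add_odd ⟨s₁*s₁*2, by rw [hs1]; ring⟩ ⟨2*j^2+2*j, by rw [htj]; ring⟩
        have hwpos : 0 < s ^ 2 + t ^ 2 := by linarith [sq_nonneg s, one_le_sq ht0]
        have hs4one : (1:ℤ) ≤ s ^ 4 := one_le_pow4 hs0
        have hw2lt : (s ^ 2 + t ^ 2) ^ 2 < |a| ^ 2 := by linarith [key2, hs4one]
        have hwA : s ^ 2 + t ^ 2 < |a| := lt_of_pow_lt_pow_left₀ 2 (le_of_lt hApos) hw2lt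
        obtain ⟨α, hα⟩ := hAodd.sub_odd hwodd
        obtain ⟨β, hβ⟩ := hAodd.add_odd hwodd
        have hαβsum : α + β = |a| := by omega
        have hβα : β - α = s ^ 2 + t ^ 2 := by omega
        have hα1 : 1 ≤ α := by omega
        have hβ1 : 1 ≤ β := by omega
        have hαβ : α * β = 8 * s₁ ^ 4 := by
          have h4 : (α + α) * (β + β) = 2 * s ^ 4 := by
            rw [← hα, ← hβ]; linear_combination key2
          rw [hs1v] at h4
          have h4' : 4*(α*β) = 4*(8*s₁^4) := by linear_combination h4
          linarith
        have hgαβ : Int.gcd α β = 1 := by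
          have hpα : ((Int.gcd α β : ℤ)) ∣ α := Int.gcd_dvd_left _ _
          have hpβ : ((Int.gcd α β : ℤ)) ∣ β := Int.gcd_dvd_right _ _
          have hpA : ((Int.gcd α β : ℤ)) ∣ |a| := hαβsum ▸ dvd_add hpα hpβ
          have hpw : ((Int.gcd α β : ℤ)) ∣ s ^ 2 + t ^ 2 := hβα ▸ dvd_sub hpβ hpα
          have hps : Int.gcd ((Int.gcd α β : ℤ)) s = 1 := by
            have hcs : ((Int.gcd ((Int.gcd α β : ℤ)) s : ℤ)) ∣ s := Int.gcd_dvd_right _ _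
            have hct2 : ((Int.gcd ((Int.gcd α β : ℤ)) s : ℤ)) ∣ t ^ 2 := by
              have h1 : ((Int.gcd ((Int.gcd α β : ℤ)) s : ℤ)) ∣ s ^ 2 + t ^ 2 :=
                (Int.gcd_dvd_left _ _).trans hpw
              have h2 : t ^ 2 = (s ^ 2 + t ^ 2) - s * s := by ring
              rw [h2]; exact dvd_sub h1 (hcs.mul_left s)
            have hst2 : Int.gcd s (t ^ 2) = 1 :=
              Int.isCoprime_iff_gcd_eq_one.mp
                ((Int.isCoprime_iff_gcd_eq_one.mpr hgst).pow_right)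
            have hdd : ((Int.gcd ((Int.gcd α β : ℤ)) s : ℤ)) ∣ (Int.gcd s (t ^ 2) : ℤ) :=
              Int.dvd_coe_gcd hcs hct2
            rw [hst2] at hdd
            exact Nat.dvd_one.mp (by exact_mod_cast hdd)
          have hp2 : ((Int.gcd α β : ℤ)) ^ 2 ∣ 2 * s ^ 4 := by
            have h1 : ((Int.gcd α β : ℤ)) ^ 2 ∣ |a| ^ 2 := pow_dvd_pow_of_dvd hpA 2
            have h2 : ((Int.gcd α β : ℤ)) ^ 2 ∣ (s ^ 2 + t ^ 2) ^ 2 := pow_dvd_pow_of_dvd hpw 2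
            have h3 : 2 * s ^ 4 = |a| ^ 2 - (s ^ 2 + t ^ 2) ^ 2 := by linear_combination -key2
            rw [h3]; exact dvd_sub h1 h2
          have hcop : IsCoprime (((Int.gcd α β : ℤ)) ^ 2) (s ^ 4) :=
            ((Int.isCoprime_iff_gcd_eq_one.mpr hps).pow_left).pow_right
          have hdvd2 : ((Int.gcd α β : ℤ)) ^ 2 ∣ 2 := hcop.dvd_of_dvd_mul_right hp2
          have hdvd2' : ((Int.gcd α β) ^ 2 : ℕ) ∣ 2 := by exact_mod_cast hdvd2
          exact sq_dvd_le_three (by norm_num) (by norm_num) hdvd2'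
        have hcopαβ : IsCoprime α β := Int.isCoprime_iff_gcd_eq_one.mpr hgαβ
        have heαβ : Even α ∨ Even β := Int.even_mul.mp ⟨4 * s₁ ^ 4, by rw [hαβ]; ring⟩
        -- helper facts for both subcases
        have hs₁sq : ∀ m n : ℤ, (8 * m ^ 4) * n ^ 4 = 8 * s₁ ^ 4 → s₁ ^ 2 = m ^ 2 * n ^ 2 := by
          intro m n h8
          have h0 : 8 * ((s₁ ^ 2 - m ^ 2 * n ^ 2) * (s₁ ^ 2 + m ^ 2 * n ^ 2)) = 0 := by
            linear_combination -h8
          have h0' : (s₁ ^ 2 - m ^ 2 * n ^ 2) * (s₁ ^ 2 + m ^ 2 * n ^ 2) = 0 := by linarith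
          rcases mul_eq_zero.mp h0' with h0'' | h0''
          · linarith
          · have hnn : (0:ℤ) ≤ m ^ 2 * n ^ 2 := by positivity
            linarith [one_le_sq hs10]
        rcases heαβ with hεα | hεβ
        · -- α even, β odd : descent
          have hβodd : Odd β := by
            rcases Int.even_or_odd β with h | h
            · exfalso
              obtain ⟨i, rfl⟩ := hεα; obtain ⟨j', rfl⟩ := h
              have h2 : (2:ℤ) ∣ (Int.gcd (i+i) (j'+j') : ℤ) :=
                Int.dvd_coe_gcd ⟨i, by ring⟩ ⟨j', by ring⟩
              rw [hgαβ] at h2; norm_num at h2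
            · exact h
          have hc2α : IsCoprime (2*α) β := (coprime_two_of_odd hβodd).mul_left hcopαβ
          have h2αβ : (2*α) * β = (2*s₁) ^ 4 := by linear_combination 2*hαβ
          obtain ⟨m', hm'⟩ := pow4_of_coprime (c := 2*s₁) hc2α h2αβ
          rcases hm' with hm' | hm'
          swap
          · have hnn : (0:ℤ) ≤ m' ^ 4 := by positivity
            linarith
          obtain ⟨n, hn⟩ := pow4_of_coprime (c := 2*s₁) hc2α.symm (by linear_combination h2αβ)
          rcases hn with hn | hn
          swap
          · have hnn : (0:ℤ) ≤ n ^ 4 := by positivity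
            linarith
          have hm'even : Even m' := by
            have hev : Even (m' ^ 4) := by rw [← hm']; exact ⟨α, by ring⟩
            exact (Int.even_pow.mp hev).1
          obtain ⟨m, hm⟩ := hm'even
          have hαval : α = 8 * m ^ 4 := by
            have hh : 2 * α = (m+m) ^ 4 := by rw [← hm, hm']
            have hh' : 2*α = 2*(8*m^4) := by linear_combination hh
            linarith
          have hs₁mn : s₁ ^ 2 = m ^ 2 * n ^ 2 := hs₁sq m n (by rw [← hαval, ← hn, hαβ])
          have hteq : t ^ 2 = n ^ 4 - 4 * n ^ 2 * m ^ 2 - 8 * m ^ 4 := by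
            have h1 : s ^ 2 + t ^ 2 = n ^ 4 - 8 * m ^ 4 := by rw [← hβα, hαval, hn]
            have h2 : s ^ 2 = 4 * (m ^ 2 * n ^ 2) := by rw [hs1v]; linear_combination 4 * hs₁mn
            linear_combination h1 - h2
          have hm0 : m ≠ 0 := by
            rintro rfl
            rw [show ((0:ℤ)^2*n^2) = 0 by ring] at hs₁mn
            exact hs10 (pow_eq_zero_iff two_ne_zero |>.mp hs₁mn)
          have hgnm : Int.gcd n m = 1 := by
            apply gcd_descend (show Int.gcd β α = 1 by rwa [Int.gcd_comm])
            · rw [hn]; exact dvd_pow_self n (by norm_num)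
            · rw [hαval]; exact ⟨8 * m ^ 3, by ring⟩
          -- measure decreases
          have hmds : m ∣ s₁ := by
            have : m ^ 2 ∣ s₁ ^ 2 := ⟨n ^ 2, hs₁mn⟩
            exact (Int.pow_dvd_pow_iff two_ne_zero).mp this
          have hm_le : m.natAbs ≤ s₁.natAbs :=
            Nat.le_of_dvd (Int.natAbs_pos.mpr hs10) (Int.natAbs_dvd_natAbs.mpr hmds)
          have hsde : s ∣ e := by
            have h0 : (e - s * t) * (e + s * t) = 0 := by linear_combination he2
            rcases mul_eq_zero.mp h0 with h0' | h0'
            · exact ⟨t, by linarith⟩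
            · exact ⟨-t, by linarith⟩
          have hs_le : s.natAbs ≤ e.natAbs :=
            Nat.le_of_dvd (Int.natAbs_pos.mpr he) (Int.natAbs_dvd_natAbs.mpr hsde)
          have hs_val : s.natAbs = 2 * s₁.natAbs := by rw [hs1v, Int.natAbs_mul]; rfl
          have hs1pos : 1 ≤ s₁.natAbs := Int.natAbs_pos.mpr hs10
          exact ih n m t hm0 (by omega) hgnm hteq
        · -- β even, α odd : 2-adic contradiction
          have hαodd : Odd α := by
            rcases Int.even_or_odd α with h | h
            · exfalso
              obtain ⟨i, rfl⟩ := h; obtain ⟨j', rfl⟩ := hεβ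
              have h2 : (2:ℤ) ∣ (Int.gcd (i+i) (j'+j') : ℤ) :=
                Int.dvd_coe_gcd ⟨i, by ring⟩ ⟨j', by ring⟩
              rw [hgαβ] at h2; norm_num at h2
            · exact h
          have hc2β : IsCoprime (2*β) α := (coprime_two_of_odd hαodd).mul_left hcopαβ.symm
          have h2βα : (2*β) * α = (2*s₁) ^ 4 := by linear_combination 2*hαβ
          obtain ⟨m', hm'⟩ := pow4_of_coprime (c := 2*s₁) hc2β h2βα
          rcases hm' with hm' | hm'
          swap
          · have hnn : (0:ℤ) ≤ m' ^ 4 := by positivity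
            linarith
          obtain ⟨n, hn⟩ := pow4_of_coprime (c := 2*s₁) hc2β.symm (by linear_combination h2βα)
          rcases hn with hn | hn
          swap
          · have hnn : (0:ℤ) ≤ n ^ 4 := by positivity
            linarith
          have hm'even : Even m' := by
            have hev : Even (m' ^ 4) := by rw [← hm']; exact ⟨β, by ring⟩
            exact (Int.even_pow.mp hev).1
          obtain ⟨m, hm⟩ := hm'even
          have hβval : β = 8 * m ^ 4 := by
            have hh : 2 * β = (m+m) ^ 4 := by rw [← hm, hm']
            have hh' : 2*β = 2*(8*m^4) := by linear_combination hh
            linarith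
          have hs₁mn : s₁ ^ 2 = m ^ 2 * n ^ 2 := hs₁sq m n (by rw [← hβval, ← hn]; linarith [hαβ])
          have hnodd : Odd n := by
            rcases Int.even_or_odd n with h | h
            · exfalso
              obtain ⟨i, rfl⟩ := h
              have : Even α := by rw [hn]; exact ⟨8*i^4, by ring⟩
              obtain ⟨c, hc⟩ := this
              obtain ⟨l, hl⟩ := hαodd
              omega
            · exact h
          obtain ⟨j, hj⟩ := hnodd
          have hteq : t ^ 2 = 8 * m ^ 4 - n ^ 4 - 4 * m ^ 2 * n ^ 2 := by
            have h1 : s ^ 2 + t ^ 2 = 8 * m ^ 4 - n ^ 4 := by rw [← hβα, hβval, hn]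
            have h2 : s ^ 2 = 4 * (m ^ 2 * n ^ 2) := by rw [hs1v]; linear_combination 4 * hs₁mn
            linear_combination h1 - h2
          rw [hj] at hteq
          have hc := congrArg (fun z : ℤ => (z : ZMod 8)) hteq
          push_cast at hc
          exact zD (m : ZMod 8) (j : ZMod 8) (t : ZMod 8) (by linear_combination hc)
    · -- s odd
      obtain ⟨i, hi⟩ := hso
      rcases Int.even_or_odd t with hte | hto
      · obtain ⟨j, rfl⟩ := hte
        rw [hak, hi] at key
        have hc := congrArg (fun z : ℤ => (z : ZMod 8)) key
        push_cast at hc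
        exact zC (k : ZMod 8) (i : ZMod 8) (j : ZMod 8) (by linear_combination hc)
      · obtain ⟨j, hj⟩ := hto
        rw [hak, hi, hj] at key
        have hc := congrArg (fun z : ℤ => (z : ZMod 8)) key
        push_cast at hc
        exact zB (k : ZMod 8) (i : ZMod 8) (j : ZMod 8) (by linear_combination hc)
  · -- u₀ = s^4, v = -t^4 : impossible by sign
    rw [hs, ht] at huv0
    have h' : s ^ 4 * -t ^ 4 = -(s ^ 4 * t ^ 4) := by ring
    rw [h'] at huv0
    linarith
  · -- u₀ = -s^4, v = t^4 : impossible by sign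
    rw [hs, ht] at huv0
    have h' : -s ^ 4 * t ^ 4 = -(s ^ 4 * t ^ 4) := by ring
    rw [h'] at huv0
    linarith
  · -- u₀ = -s^4, v = -t^4 : impossible since sum is a square
    rw [hs, ht] at huv0
    have hst4 : s ^ 4 * t ^ 4 = e ^ 4 := by linear_combination huv0
    have he2 : e ^ 2 = s ^ 2 * t ^ 2 := by
      have h0 : (e ^ 2 - s ^ 2 * t ^ 2) * (e ^ 2 + s ^ 2 * t ^ 2) = 0 := by
        linear_combination -hst4
      rcases mul_eq_zero.mp h0 with h0 | h0
      · linarith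
      · have hnn : (0:ℤ) ≤ s ^ 2 * t ^ 2 := by positivity
        linarith [one_le_sq he]
    have hs0 : s ≠ 0 := by
      rintro rfl
      rw [show ((0:ℤ)^2*t^2) = 0 by ring] at he2
      exact he (pow_eq_zero_iff two_ne_zero |>.mp he2)
    rw [hs, ht] at hsum
    have hs4 : (1:ℤ) ≤ s ^ 4 := one_le_pow4 hs0
    have hid : (s^2 - t^2)^2 = s^4 - 2*(s^2*t^2) + t^4 := by ring
    linarith [sq_nonneg (s^2 - t^2), sq_nonneg a, he2, hsum, hid, hs4]

/-- No integer solutions to b² = a⁴ - 4a²e² - 8e⁴ with e ≠ 0 and gcd(a,e)=1. -/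
private lemma lemC (a e b : ℤ) (he : e ≠ 0) (hg : Int.gcd a e = 1)
    (hb : b ^ 2 = a ^ 4 - 4 * a ^ 2 * e ^ 2 - 8 * e ^ 4) : False := by
  suffices H : ∀ N : ℕ, ∀ a e b : ℤ, e ≠ 0 → e.natAbs ≤ N → Int.gcd a e = 1 →
      b ^ 2 = a ^ 4 - 4 * a ^ 2 * e ^ 2 - 8 * e ^ 4 → False by
    exact H e.natAbs a e b he le_rfl hg hb
  intro N
  induction N with
  | zero =>
    intro a e b he hE _ _
    exact he (Int.natAbs_eq_zero.mp (Nat.le_zero.mp hE))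
  | succ N ih =>
    clear hb hg he a e b
    intro a e b he hE hg hb
    have ha : Odd a := by
      rcases Int.even_or_odd a with hae | hao
      · exfalso
        have heodd : Odd e := by
          rcases Int.even_or_odd e with hee | heo
          · exfalso
            obtain ⟨i, hi⟩ := hae; obtain ⟨j, hj⟩ := hee
            have h2 : (2:ℤ) ∣ (Int.gcd a e : ℤ) :=
              Int.dvd_coe_gcd ⟨i, by omega⟩ ⟨j, by omega⟩
            rw [hg] at h2; norm_num at h2
          · exact heo
        obtain ⟨i, rfl⟩ := hae; obtain ⟨f, rfl⟩ := heodd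
        have hc := congrArg (fun z : ℤ => (z : ZMod 16)) hb
        push_cast at hc
        exact zA (i : ZMod 16) (f : ZMod 16) (b : ZMod 16) (by linear_combination hc)
      · exact hao
    obtain ⟨k, hak⟩ := ha
    have hbodd : Odd b := by
      rcases Int.even_or_odd b with hbe | hbo
      · exfalso
        obtain ⟨c, rfl⟩ := hbe
        rw [hak] at hb
        have hc := congrArg (fun z : ℤ => (z : ZMod 2)) hb
        push_cast at hc
        exact zP (k : ZMod 2) (e : ZMod 2) (c : ZMod 2) (by linear_combination hc)
      · exact hbo
    obtain ⟨l, hbl⟩ := hbodd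
    set u : ℤ := 2*k^2 + 2*k + l + 1 - e^2 with hu_def
    set v : ℤ := 2*k^2 + 2*k - l - e^2 with hv_def
    have h2u : 2*u = a^2 - 2*e^2 + b := by rw [hu_def, hak, hbl]; ring
    have h2v : 2*v = a^2 - 2*e^2 - b := by rw [hv_def, hak, hbl]; ring
    have huv : u * v = 3 * e^4 := by
      have h4 : (2*u)*(2*v) = 12*e^4 := by rw [h2u, h2v]; linear_combination -hb
      have h4' : 4*(u*v) = 4*(3*e^4) := by linear_combination h4
      linarith
    have hsum : u + v = a^2 - 2*e^2 := by linarith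
    have hguv : Int.gcd u v = 1 := by
      have hpu : ((Int.gcd u v : ℤ)) ∣ u := Int.gcd_dvd_left _ _
      have hpv : ((Int.gcd u v : ℤ)) ∣ v := Int.gcd_dvd_right _ _
      have hpsum : ((Int.gcd u v : ℤ)) ∣ a^2 - 2*e^2 := hsum ▸ dvd_add hpu hpv
      have hpe : Int.gcd ((Int.gcd u v : ℤ)) e = 1 := by
        have hce : ((Int.gcd ((Int.gcd u v : ℤ)) e : ℤ)) ∣ e := Int.gcd_dvd_right _ _
        have hca2 : ((Int.gcd ((Int.gcd u v : ℤ)) e : ℤ)) ∣ a^2 := by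
          have h1 : ((Int.gcd ((Int.gcd u v : ℤ)) e : ℤ)) ∣ a^2 - 2*e^2 :=
            (Int.gcd_dvd_left _ _).trans hpsum
          have h2 : a^2 = (a^2 - 2*e^2) + 2*e*e := by ring
          rw [h2]; exact dvd_add h1 ((hce.mul_left (2*e)))
        have hga2e : Int.gcd (a^2) e = 1 :=
          Int.isCoprime_iff_gcd_eq_one.mp ((Int.isCoprime_iff_gcd_eq_one.mpr hg).pow_left)
        have hdd : ((Int.gcd ((Int.gcd u v : ℤ)) e : ℤ)) ∣ (Int.gcd (a^2) e : ℤ) :=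
          Int.dvd_coe_gcd hca2 hce
        rw [hga2e] at hdd
        exact Nat.dvd_one.mp (by exact_mod_cast hdd)
      have hp2 : ((Int.gcd u v : ℤ)) ^ 2 ∣ 3 * e^4 := by
        rw [← huv, sq]; exact mul_dvd_mul hpu hpv
      have hcop : IsCoprime (((Int.gcd u v : ℤ)) ^ 2) (e ^ 4) :=
        ((Int.isCoprime_iff_gcd_eq_one.mpr hpe).pow_left).pow_right
      have hdvd3 : ((Int.gcd u v : ℤ)) ^ 2 ∣ 3 := hcop.dvd_of_dvd_mul_right hp2
      have hdvd3' : ((Int.gcd u v) ^ 2 : ℕ) ∣ 3 := by exact_mod_cast hdvd3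
      exact sq_dvd_le_three (by norm_num) (by norm_num) hdvd3'
    have h3 : (3:ℤ) ∣ u * v := ⟨e^4, huv⟩
    rcases Int.Prime.dvd_mul' (by norm_num) h3 with h3u | h3v
    · exact lemC_core N ih a e u v he hE hguv h3u huv hsum ⟨k, hak⟩
    · refine lemC_core N ih a e v u he hE (by rwa [Int.gcd_comm]) h3v ?_ (by linarith) ⟨k, hak⟩
      rw [mul_comm]; exact huv

private lemma lemD1neg (a e b : ℤ) (hg : Int.gcd a e = 1)
    (hb : b ^ 2 = -a ^ 4 - 4 * a ^ 2 * e ^ 2 + 8 * e ^ 4) : False := by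
  rcases Int.even_or_odd a with hae | hao
  · have heodd : Odd e := by
      rcases Int.even_or_odd e with hee | heo
      · exfalso
        obtain ⟨i, hi⟩ := hae; obtain ⟨j, hj⟩ := hee
        have h2 : (2:ℤ) ∣ (Int.gcd a e : ℤ) := Int.dvd_coe_gcd ⟨i, by omega⟩ ⟨j, by omega⟩
        rw [hg] at h2; norm_num at h2
      · exact heo
    obtain ⟨i, rfl⟩ := hae; obtain ⟨f, rfl⟩ := heodd
    have hc := congrArg (fun z : ℤ => (z : ZMod 16)) hb
    push_cast at hc
    exact zF (i : ZMod 16) (f : ZMod 16) (b : ZMod 16) (by linear_combination hc)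
  · obtain ⟨k, rfl⟩ := hao
    have hc := congrArg (fun z : ℤ => (z : ZMod 8)) hb
    push_cast at hc
    exact zE (k : ZMod 8) (e : ZMod 8) (b : ZMod 8) (by linear_combination hc)

private lemma lemD2 (a e b : ℤ) (hg : Int.gcd a e = 1)
    (hb : b ^ 2 = 2 * a ^ 4 - 4 * a ^ 2 * e ^ 2 - 4 * e ^ 4) : False := by
  have hbe : Even b := by
    have h1 : Even (b ^ 2) := ⟨a ^ 4 - 2 * a ^ 2 * e ^ 2 - 2 * e ^ 4, by linarith⟩
    exact (Int.even_pow.mp h1).1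
  obtain ⟨c, rfl⟩ := hbe
  have hb1 : 2 * c ^ 2 = a ^ 4 - 2 * a ^ 2 * e ^ 2 - 2 * e ^ 4 := by
    have h2 : 2 * (2 * c ^ 2) = 2 * (a ^ 4 - 2 * a ^ 2 * e ^ 2 - 2 * e ^ 4) := by
      linear_combination hb
    linarith
  have hae : Even a := by
    have h1 : Even (a ^ 4) := ⟨c ^ 2 + a ^ 2 * e ^ 2 + e ^ 4, by linarith⟩
    exact (Int.even_pow.mp h1).1
  have heodd : Odd e := by
    rcases Int.even_or_odd e with hee | heo
    · exfalso
      obtain ⟨i, hi⟩ := hae; obtain ⟨j, hj⟩ := hee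
      have h2 : (2:ℤ) ∣ (Int.gcd a e : ℤ) := Int.dvd_coe_gcd ⟨i, by omega⟩ ⟨j, by omega⟩
      rw [hg] at h2; norm_num at h2
    · exact heo
  obtain ⟨i, rfl⟩ := hae; obtain ⟨f, rfl⟩ := heodd
  have hceq : c ^ 2 = 8 * i ^ 4 - (2*f+1) ^ 4 - 4 * i ^ 2 * (2*f+1) ^ 2 := by
    have h2 : 2 * (c ^ 2) = 2 * (8 * i ^ 4 - (2*f+1) ^ 4 - 4 * i ^ 2 * (2*f+1) ^ 2) := by
      linear_combination hb1
    linarith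
  have hc := congrArg (fun z : ℤ => (z : ZMod 8)) hceq
  push_cast at hc
  exact zD (i : ZMod 8) (f : ZMod 8) (c : ZMod 8) (by linear_combination hc)

private lemma lemD2neg (a e b : ℤ) (ha0 : a ≠ 0) (hg : Int.gcd a e = 1)
    (hb : b ^ 2 = -2 * a ^ 4 - 4 * a ^ 2 * e ^ 2 + 4 * e ^ 4) : False := by
  have hbe : Even b := by
    have h1 : Even (b ^ 2) := ⟨-a ^ 4 - 2 * a ^ 2 * e ^ 2 + 2 * e ^ 4, by linarith⟩
    exact (Int.even_pow.mp h1).1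
  obtain ⟨c, rfl⟩ := hbe
  have hb1 : 2 * c ^ 2 = -a ^ 4 - 2 * a ^ 2 * e ^ 2 + 2 * e ^ 4 := by
    have h2 : 2 * (2 * c ^ 2) = 2 * (-a ^ 4 - 2 * a ^ 2 * e ^ 2 + 2 * e ^ 4) := by
      linear_combination hb
    linarith
  have hae : Even a := by
    have h1 : Even (a ^ 4) := ⟨-c ^ 2 - a ^ 2 * e ^ 2 + e ^ 4, by linarith⟩
    exact (Int.even_pow.mp h1).1
  obtain ⟨i, hi⟩ := hae
  have hi0 : i ≠ 0 := by rintro rfl; exact ha0 (by omega)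
  have hceq : c ^ 2 = e ^ 4 - 4 * e ^ 2 * i ^ 2 - 8 * i ^ 4 := by
    rw [hi] at hb1
    have h2 : 2 * (c ^ 2) = 2 * (e ^ 4 - 4 * e ^ 2 * i ^ 2 - 8 * i ^ 4) := by
      linear_combination hb1
    linarith
  have hgei : Int.gcd e i = 1 := by
    apply gcd_descend (show Int.gcd e a = 1 by rwa [Int.gcd_comm]) dvd_rfl
    exact ⟨2, by omega⟩
  exact lemC e i c hi0 hgei hceq

/-- the main integral reduction -/
private lemma reduction (m n p q : ℤ) (hn : 0 < n) (hq : 0 < q) (hp : p ≠ 0) (hm : m ≠ 0)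
    (hgmn : Int.gcd m n = 1) (hgpq : Int.gcd p q = 1)
    (hkey : p ^ 2 * n ^ 3 = q ^ 2 * (m ^ 3 - 4 * m ^ 2 * n - 8 * m * n ^ 2)) : False := by
  have hn0 : n ≠ 0 := ne_of_gt hn
  -- coprimality of n with the cubic
  have hcop_nm : IsCoprime n m := Int.isCoprime_iff_gcd_eq_one.mpr (by rwa [Int.gcd_comm])
  have hcop_nM : IsCoprime n (m ^ 3 - 4 * m ^ 2 * n - 8 * m * n ^ 2) := by
    have h1 : IsCoprime n (m ^ 3) := hcop_nm.pow_right
    have h2 : m ^ 3 - 4 * m ^ 2 * n - 8 * m * n ^ 2 = m ^ 3 + n * (-(4 * m ^ 2) - 8 * m * n) := by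
      ring
    rw [h2]
    exact h1.add_mul_left_right _
  -- q² = n³
  have hq2n3 : q ^ 2 ∣ n ^ 3 := by
    have hcp : IsCoprime (q ^ 2) (p ^ 2) :=
      ((Int.isCoprime_iff_gcd_eq_one.mpr (by rwa [Int.gcd_comm])).pow_left).pow_right
    exact hcp.dvd_of_dvd_mul_left ⟨m ^ 3 - 4 * m ^ 2 * n - 8 * m * n ^ 2, by linarith⟩
  have hn3q2 : n ^ 3 ∣ q ^ 2 := by
    have hcp : IsCoprime (n ^ 3) (m ^ 3 - 4 * m ^ 2 * n - 8 * m * n ^ 2) := hcop_nM.pow_left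
    exact hcp.dvd_of_dvd_mul_right ⟨p ^ 2, by linarith⟩
  have hn3 : n ^ 3 = q ^ 2 := Int.dvd_antisymm (by positivity) (by positivity) hn3q2 hq2n3
  -- n is a square
  have hnq : n ∣ q := by
    have h1 : n ^ 2 ∣ q ^ 2 := by rw [← hn3]; exact ⟨n, by ring⟩
    exact (Int.pow_dvd_pow_iff two_ne_zero).mp h1
  obtain ⟨r, hr⟩ := hnq
  have hr0 : r ≠ 0 := by rintro rfl; rw [hr] at hq; simp at hq
  have hne2 : n = r ^ 2 := by
    have h1 : n ^ 2 * (n - r ^ 2) = 0 := by rw [hr] at hn3; linear_combination hn3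
    rcases mul_eq_zero.mp h1 with h | h
    · exact absurd (pow_eq_zero_iff two_ne_zero |>.mp h) hn0
    · linarith
  set e := r with he_def
  -- p² = m * K
  set K := m ^ 2 - 4 * m * e ^ 2 - 8 * e ^ 4 with hKdef
  have hMK : m ^ 3 - 4 * m ^ 2 * n - 8 * m * n ^ 2 = m * K := by rw [hKdef, hne2]; ring
  have hpK : p ^ 2 = m * K := by
    rw [hMK] at hkey
    rw [← hn3] at hkey
    have h1 : n ^ 3 * p ^ 2 = n ^ 3 * (m * K) := by linear_combination hkey
    exact mul_left_cancel₀ (pow_ne_zero 3 hn0) h1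
  have hK0 : K ≠ 0 := by
    rintro h
    rw [h, mul_zero] at hpK
    exact hp (pow_eq_zero_iff two_ne_zero |>.mp hpK)
  -- gcd of m and K divides 8
  have hgpos : 0 < Int.gcd m K := by
    rcases Nat.eq_zero_or_pos (Int.gcd m K) with h | h
    · exfalso; exact hm (Int.gcd_eq_zero_iff.mp h).1
    · exact h
  have hgm : ((Int.gcd m K : ℤ)) ∣ m := Int.gcd_dvd_left _ _
  have hgK : ((Int.gcd m K : ℤ)) ∣ K := Int.gcd_dvd_right _ _
  have hge : Int.gcd ((Int.gcd m K : ℤ)) e = 1 := by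
    have hce : ((Int.gcd ((Int.gcd m K : ℤ)) e : ℤ)) ∣ e := Int.gcd_dvd_right _ _
    have hcm : ((Int.gcd ((Int.gcd m K : ℤ)) e : ℤ)) ∣ m := (Int.gcd_dvd_left _ _).trans hgm
    have hcn : ((Int.gcd ((Int.gcd m K : ℤ)) e : ℤ)) ∣ n := by
      rw [hne2]; exact hce.trans (dvd_pow_self e two_ne_zero)
    have hdd : ((Int.gcd ((Int.gcd m K : ℤ)) e : ℤ)) ∣ (Int.gcd m n : ℤ) := Int.dvd_coe_gcd hcm hcn
    rw [hgmn] at hdd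
    exact Nat.dvd_one.mp (by exact_mod_cast hdd)
  have hgd8 : ((Int.gcd m K : ℤ)) ∣ 8 := by
    have h8e : ((Int.gcd m K : ℤ)) ∣ 8 * e ^ 4 := by
      have h1 : 8 * e ^ 4 = m * m - 4 * e ^ 2 * m - K := by rw [hKdef]; ring
      rw [h1]
      exact dvd_sub (dvd_sub (hgm.mul_left m) (hgm.mul_left _)) hgK
    have hcop : IsCoprime ((Int.gcd m K : ℤ)) (e ^ 4) :=
      (Int.isCoprime_iff_gcd_eq_one.mpr hge).pow_right
    exact hcop.dvd_of_dvd_mul_right h8e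
  have hgd8' : Int.gcd m K ∣ 8 := by exact_mod_cast hgd8
  have hcases : Int.gcd m K = 1 ∨ Int.gcd m K = 2 ∨ Int.gcd m K = 4 ∨ Int.gcd m K = 8 := by
    have h1 : Int.gcd m K ≤ 8 := Nat.le_of_dvd (by norm_num) hgd8'
    interval_cases h : (Int.gcd m K) <;> revert hgd8' <;> simp_all <;> omega
  -- split m = G m₁, K = G K₁ with coprime factors
  have hdiv := Int.gcd_div_gcd_div_gcd hgpos
  obtain ⟨G, hGdef⟩ : ∃ G : ℕ, Int.gcd m K = G := ⟨_, rfl⟩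
  rw [hGdef] at hgpos hcases hgm hgK hdiv
  obtain ⟨m₁, hm₁⟩ := hgm
  obtain ⟨K₁, hK₁⟩ := hgK
  have hGne : ((G : ℤ)) ≠ 0 := by exact_mod_cast hgpos.ne'
  have hgm₁K₁ : Int.gcd m₁ K₁ = 1 := by
    have h2 : m / ((G:ℤ)) = m₁ := by rw [hm₁]; exact Int.mul_ediv_cancel_left m₁ hGne
    have h3 : K / ((G:ℤ)) = K₁ := by rw [hK₁]; exact Int.mul_ediv_cancel_left K₁ hGne
    rwa [h2, h3] at hdiv
  have hgp : ((G:ℤ)) ∣ p := by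
    have h1 : ((G:ℤ)) ^ 2 ∣ p ^ 2 := by
      rw [hpK, hm₁, hK₁]; exact ⟨m₁ * K₁, by ring⟩
    exact (Int.pow_dvd_pow_iff two_ne_zero).mp h1
  obtain ⟨p₁, hp₁⟩ := hgp
  have hp₁0 : p₁ ≠ 0 := by rintro rfl; rw [mul_zero] at hp₁; exact hp hp₁
  have hm₁K₁p : m₁ * K₁ = p₁ ^ 2 := by
    have h1 : ((G:ℤ)) ^ 2 * (m₁ * K₁) = ((G:ℤ)) ^ 2 * p₁ ^ 2 := by
      have hpK' := hpK
      rw [hm₁, hK₁, hp₁] at hpK'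
      linear_combination -hpK'
    exact mul_left_cancel₀ (pow_ne_zero 2 hGne) h1
  have hm₁0 : m₁ ≠ 0 := by rintro rfl; rw [mul_zero] at hm₁; exact hm hm₁
  obtain ⟨u₁, hu₁⟩ := Int.sq_of_gcd_eq_one hgm₁K₁ hm₁K₁p
  obtain ⟨u₂, hu₂⟩ := Int.sq_of_gcd_eq_one (by rwa [Int.gcd_comm]) (by rwa [mul_comm])
  -- rule out mixed signs
  have hsign : (m₁ = u₁ ^ 2 ∧ K₁ = u₂ ^ 2) ∨ (m₁ = -u₁ ^ 2 ∧ K₁ = -u₂ ^ 2) := by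
    rcases hu₁ with h1 | h1 <;> rcases hu₂ with h2 | h2
    · exact Or.inl ⟨h1, h2⟩
    · exfalso
      rw [h1, h2] at hm₁K₁p
      have hz : p₁ ^ 2 + (u₁ * u₂) ^ 2 = 0 := by linear_combination -hm₁K₁p
      linarith [one_le_sq hp₁0, sq_nonneg (u₁ * u₂)]
    · exfalso
      rw [h1, h2] at hm₁K₁p
      have hz : p₁ ^ 2 + (u₁ * u₂) ^ 2 = 0 := by linear_combination -hm₁K₁p
      linarith [one_le_sq hp₁0, sq_nonneg (u₁ * u₂)]
    · exact Or.inr ⟨h1, h2⟩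
  -- package into d * A² form
  obtain ⟨d, A, B, hd, hmA, hKB⟩ :
      ∃ d A B : ℤ, (d = 1 ∨ d = -1 ∨ d = 2 ∨ d = -2) ∧ m = d * A ^ 2 ∧ K = d * B ^ 2 := by
    rcases hcases with hG | hG | hG | hG <;>
      rw [hG] at hm₁ hK₁ <;> push_cast at hm₁ hK₁ <;>
      rcases hsign with ⟨h1, h2⟩ | ⟨h1, h2⟩
    · exact ⟨1, u₁, u₂, by norm_num, by linear_combination hm₁ + 1*h1, by linear_combination hK₁ + 1*h2⟩
    · exact ⟨-1, u₁, u₂, by norm_num, by linear_combination hm₁ + 1*h1, by linear_combination hK₁ + 1*h2⟩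
    · exact ⟨2, u₁, u₂, by norm_num, by linear_combination hm₁ + 2*h1, by linear_combination hK₁ + 2*h2⟩
    · exact ⟨-2, u₁, u₂, by norm_num, by linear_combination hm₁ + 2*h1, by linear_combination hK₁ + 2*h2⟩
    · exact ⟨1, 2*u₁, 2*u₂, by norm_num, by linear_combination hm₁ + 4*h1, by linear_combination hK₁ + 4*h2⟩
    · exact ⟨-1, 2*u₁, 2*u₂, by norm_num, by linear_combination hm₁ + 4*h1, by linear_combination hK₁ + 4*h2⟩
    · exact ⟨2, 2*u₁, 2*u₂, by norm_num, by linear_combination hm₁ + 8*h1, by linear_combination hK₁ + 8*h2⟩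
    · exact ⟨-2, 2*u₁, 2*u₂, by norm_num, by linear_combination hm₁ + 8*h1, by linear_combination hK₁ + 8*h2⟩
  have hAm : A ∣ m := ⟨d * A, by rw [hmA]; ring⟩
  have hA0 : A ≠ 0 := by rintro rfl; rw [hmA] at hm; simp at hm
  have hgAe : Int.gcd A e = 1 := by
    apply gcd_descend hgmn hAm
    rw [hne2]; exact dvd_pow_self e two_ne_zero
  have hKval : m ^ 2 - 4 * m * e ^ 2 - 8 * e ^ 4 = d * B ^ 2 := by rw [← hKdef]; exact hKB
  rcases hd with rfl | rfl | rfl | rfl <;> rw [hmA] at hKval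
  · exact lemC A e B hr0 hgAe (by linear_combination -hKval)
  · exact lemD1neg A e B hgAe (by linear_combination hKval)
  · refine lemD2 A e B hgAe ?_
    have h2 : 2 * (B ^ 2) = 2 * (2 * A ^ 4 - 4 * A ^ 2 * e ^ 2 - 4 * e ^ 4) := by
      linear_combination -hKval
    linarith
  · refine lemD2neg A e B hA0 hgAe ?_
    have h2 : 2 * (B ^ 2) = 2 * (-2 * A ^ 4 - 4 * A ^ 2 * e ^ 2 + 4 * e ^ 4) := by
      linear_combination hKval
    linarith

theorem stmt_8 : ¬ ∃ x y : ℚ, y ≠ 0 ∧ (1 - x) * (x ^ 2 - 4 * x + 1) = -2 * y ^ 2 := by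
  rintro ⟨x, y, hy, hxy⟩
  set X : ℚ := 2 * (x - 1) with hXdef
  set Y : ℚ := 4 * y with hYdef
  have hY0 : Y ≠ 0 := by rw [hYdef]; exact mul_ne_zero (by norm_num) hy
  have hYX : Y ^ 2 = X ^ 3 - 4 * X ^ 2 - 8 * X := by
    rw [hXdef, hYdef]; linear_combination (8 : ℚ) * hxy
  have hX0 : X ≠ 0 := by
    intro h
    rw [h] at hYX
    norm_num at hYX
    exact hY0 hYX
  have hXden : ((X.den : ℚ)) ≠ 0 := by
    have := X.pos
    exact_mod_cast this.ne'
  have hYden : ((Y.den : ℚ)) ≠ 0 := by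
    have := Y.pos
    exact_mod_cast this.ne'
  have hQ : (Y.num : ℚ) ^ 2 * (X.den : ℚ) ^ 3 =
      (Y.den : ℚ) ^ 2 * ((X.num : ℚ) ^ 3 - 4 * (X.num : ℚ) ^ 2 * (X.den : ℚ)
        - 8 * (X.num : ℚ) * (X.den : ℚ) ^ 2) := by
    have h1 : ((X.num : ℚ) / (X.den : ℚ)) = X := Rat.num_div_den X
    have h2 : ((Y.num : ℚ) / (Y.den : ℚ)) = Y := Rat.num_div_den Y
    rw [← h1, ← h2] at hYX
    field_simp at hYX
    have h3 : (X.den : ℚ) ^ 3 * ((Y.num : ℚ) ^ 2 * (X.den : ℚ) ^ 3) =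
        (X.den : ℚ) ^ 3 * ((Y.den : ℚ) ^ 2 * ((X.num : ℚ) ^ 3 - 4 * (X.num : ℚ) ^ 2 * (X.den : ℚ)
          - 8 * (X.num : ℚ) * (X.den : ℚ) ^ 2)) := by linear_combination (X.den : ℚ) ^ 3 * hYX
    exact mul_left_cancel₀ (pow_ne_zero 3 hXden) h3
  have hZ : (Y.num) ^ 2 * ((X.den : ℤ)) ^ 3 =
      ((Y.den : ℤ)) ^ 2 * ((X.num) ^ 3 - 4 * (X.num) ^ 2 * (X.den : ℤ)
        - 8 * (X.num) * ((X.den : ℤ)) ^ 2) := by exact_mod_cast hQ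
  refine reduction X.num (X.den : ℤ) Y.num (Y.den : ℤ) ?_ ?_ ?_ ?_ ?_ ?_ hZ
  · exact_mod_cast X.pos
  · exact_mod_cast Y.pos
  · exact Rat.num_ne_zero.mpr hY0
  · exact Rat.num_ne_zero.mpr hX0
  · show X.num.natAbs.gcd ((X.den : ℤ)).natAbs = 1
    rw [Int.natAbs_natCast]
    exact X.reduced
  · show Y.num.natAbs.gcd ((Y.den : ℤ)).natAbs = 1
    rw [Int.natAbs_natCast]
    exact Y.reduced
end

section
/- Let α be a real root of X³ − 3X − 1. Then the map σ given by σ(α) = −1/(1+α) satisfies σ(α) = −2 − α + α², σ is a field automorphism of ℚ(α) of order 3, and Gal(ℚ(α)/ℚ) is cyclic of order 3 generated by σ. -/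
/-!
X³ − 3X − 1 is Shanks' simplest cubic with parameter 0: modulo the cubic, the polynomial map
x ↦ x² − x − 2 (which equals −1/(1 + x)) sends a root to a root and has order three on the roots.
So α ↦ α² − α − 2 extends to an automorphism σ of ℚ(α) with σ³ = 1 ≠ σ. As X³ − 3X − 1 has no
rational root, it is irreducible and [ℚ(α) : ℚ] = 3 bounds the number of automorphisms, so σ
generates the whole automorphism group.
-/

open IntermediateField Polynomial

section AdjoinSimple

variable {F E : Type*} [Field F] [Field E] [Algebra F E] {α : E}

theorem exists_algEquiv_adjoin_simple_gen_eq (hα : IsIntegral F α) {β : F⟮α⟯}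
    (hβ : aeval β (minpoly F α) = 0) :
    ∃ σ : Gal(F⟮α⟯/F), σ (AdjoinSimple.gen F α) = β := by
  have := adjoin.finiteDimensional hα
  let f := (algHomAdjoinIntegralEquiv F hα).symm ⟨β, mem_aroots.mpr ⟨minpoly.ne_zero hα, hβ⟩⟩
  exact ⟨.ofBijective f f.bijective, algHomAdjoinIntegralEquiv_symm_apply_gen F hα _⟩

theorem algEquiv_adjoin_simple_ext {σ τ : Gal(F⟮α⟯/F)}
    (h : σ (AdjoinSimple.gen F α) = τ (AdjoinSimple.gen F α)) : σ = τ :=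
  AlgEquiv.coe_toAlgHom_injective <| adjoin_algHom_ext F <| by rintro _ rfl; exact h

end AdjoinSimple

theorem AlgEquiv.zpowers_eq_top_of_orderOf_eq_finrank {F E : Type*} [Field F] [Field E]
    [Algebra F E] [FiniteDimensional F E] {σ : Gal(E/F)} (h : orderOf σ = Module.finrank F E) :
    Subgroup.zpowers σ = ⊤ :=
  Subgroup.eq_top_of_le_card _ <| by
    rw [Nat.card_zpowers, h, Nat.card_eq_fintype_card]
    exact AlgEquiv.card_le

namespace SimplestCubic

section Ring

variable {R : Type*} [CommRing R] {x : R}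

def rotate (x : R) : R := -2 - x + x ^ 2

theorem map_rotate {S F : Type*} [CommRing S] [FunLike F R S] [RingHomClass F R S] (f : F)
    (x : R) : f (rotate x) = rotate (f x) := by
  simp [rotate, map_ofNat f 2]

theorem rotate_isRoot (hx : x ^ 3 - 3 * x - 1 = 0) : rotate x ^ 3 - 3 * rotate x - 1 = 0 := by
  unfold rotate
  linear_combination (x ^ 3 - 3 * x ^ 2 + 3) * hx

theorem rotate_rotate (hx : x ^ 3 - 3 * x - 1 = 0) : rotate (rotate x) = 2 - x ^ 2 := by
  unfold rotate
  linear_combination (x - 2) * hx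

theorem rotate_rotate_rotate (hx : x ^ 3 - 3 * x - 1 = 0) : rotate (rotate (rotate x)) = x := by
  rw [rotate_rotate hx, rotate]
  linear_combination x * hx

theorem rotate_ne_self (h3 : (3 : R) ≠ 0) (hx : x ^ 3 - 3 * x - 1 = 0) : rotate x ≠ x := by
  intro h
  unfold rotate at h
  apply h3
  linear_combination (x ^ 2 - x - 3) * h - (x - 3) * hx

theorem one_add_mul_rotate (hx : x ^ 3 - 3 * x - 1 = 0) : (1 + x) * rotate x = -1 := by
  unfold rotate
  linear_combination hx

theorem rotate_eq_neg_one_div {K : Type*} [Field K] {x : K} (hx : x ^ 3 - 3 * x - 1 = 0) :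
    rotate x = -1 / (1 + x) := by
  have h := one_add_mul_rotate hx
  have h1 : 1 + x ≠ 0 := left_ne_zero_of_mul (by rw [h]; norm_num)
  rw [eq_div_iff h1, mul_comm, h]

theorem isIntegral {A : Type*} [Ring A] [Algebra R A] {x : A} (hx : x ^ 3 - 3 * x - 1 = 0) :
    IsIntegral R x :=
  ⟨X ^ 3 - C 3 * X - 1, by monicity!, by
    rw [← aeval_def]
    simp only [map_sub, map_mul, map_pow, aeval_X, map_one, map_ofNat]
    exact hx⟩

end Ring

theorem rat_not_isRoot (r : ℚ) : r ^ 3 - 3 * r - 1 ≠ 0 := by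
  intro hr
  have hmonic : (X ^ 3 - C 3 * X - 1 : ℤ[X]).Monic := by monicity!
  obtain ⟨n, rfl, hn⟩ := exists_integer_of_is_root_of_monic hmonic (r := r) <| by
    simp only [map_sub, map_mul, map_pow, aeval_X, map_one, map_ofNat]
    linear_combination hr
  have hunit : IsUnit n := isUnit_of_dvd_unit hn (by simp [coeff_one])
  rcases Int.isUnit_iff.mp hunit with rfl | rfl <;> norm_num at hr

theorem irreducible : Irreducible (X ^ 3 - C 3 * X - 1 : ℚ[X]) := by
  have hdeg : (X ^ 3 - C 3 * X - 1 : ℚ[X]).natDegree = 3 := by compute_degree!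
  refine irreducible_of_degree_le_three_of_not_isRoot (by rw [hdeg]; decide)
    fun r hr ↦ rat_not_isRoot r ?_
  simpa using hr

theorem minpoly_eq {K : Type*} [Field K] [Algebra ℚ K] {x : K} (hx : x ^ 3 - 3 * x - 1 = 0) :
    minpoly ℚ x = X ^ 3 - C 3 * X - 1 :=
  (minpoly.eq_of_irreducible_of_monic irreducible (by simp [hx]) (by monicity!)).symm

variable {F E : Type*} [Field F] [Field E] [Algebra F E] {α : E}

theorem gen_isRoot (hα : α ^ 3 - 3 * α - 1 = 0) :
    AdjoinSimple.gen F α ^ 3 - 3 * AdjoinSimple.gen F α - 1 = 0 :=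
  (algebraMap F⟮α⟯ E).injective <| by
    simp only [map_sub, map_mul, map_pow, map_ofNat, map_one, map_zero,
      AdjoinSimple.algebraMap_gen]
    exact hα

theorem finrank_adjoin [CharZero E] (hα : α ^ 3 - 3 * α - 1 = 0) :
    Module.finrank ℚ ℚ⟮α⟯ = 3 := by
  rw [adjoin.finrank (isIntegral hα), minpoly_eq hα]
  compute_degree!

theorem orderOf_eq_three [CharZero E] (hα : α ^ 3 - 3 * α - 1 = 0) {σ : Gal(F⟮α⟯/F)}
    (hσ : σ (AdjoinSimple.gen F α) = rotate (AdjoinSimple.gen F α)) : orderOf σ = 3 := by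
  have hg := gen_isRoot (F := F) hα
  have : Fact (Nat.Prime 3) := ⟨Nat.prime_three⟩
  refine orderOf_eq_prime (algEquiv_adjoin_simple_ext ?_) fun h ↦
    rotate_ne_self three_ne_zero hg ?_
  · simp [pow_succ, hσ, map_rotate, rotate_rotate_rotate hg]
  · rw [← hσ, h, AlgEquiv.one_apply]

end SimplestCubic

open SimplestCubic

theorem stmt_10 (α : ℝ) (hα : α ^ 3 - 3 * α - 1 = 0) :
    ∃ σ : ℚ⟮α⟯ ≃ₐ[ℚ] ℚ⟮α⟯,
      σ (AdjoinSimple.gen ℚ α) = -1 / (1 + AdjoinSimple.gen ℚ α) ∧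
      σ (AdjoinSimple.gen ℚ α) =
        -2 - AdjoinSimple.gen ℚ α + (AdjoinSimple.gen ℚ α) ^ 2 ∧
      orderOf σ = 3 ∧
      IsCyclic (ℚ⟮α⟯ ≃ₐ[ℚ] ℚ⟮α⟯) ∧
      Nat.card (ℚ⟮α⟯ ≃ₐ[ℚ] ℚ⟮α⟯) = 3 ∧
      ∀ τ : ℚ⟮α⟯ ≃ₐ[ℚ] ℚ⟮α⟯, τ ∈ Subgroup.zpowers σ := by
  set g := AdjoinSimple.gen ℚ α
  have hg : g ^ 3 - 3 * g - 1 = 0 := gen_isRoot hα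
  have hint : IsIntegral ℚ α := isIntegral hα
  have := adjoin.finiteDimensional hint
  obtain ⟨σ, hσ⟩ := exists_algEquiv_adjoin_simple_gen_eq hint (β := rotate g)
    (by simpa [minpoly_eq hα] using rotate_isRoot hg)
  have horder : orderOf σ = 3 := orderOf_eq_three hα hσ
  have htop : Subgroup.zpowers σ = ⊤ :=
    AlgEquiv.zpowers_eq_top_of_orderOf_eq_finrank (by rw [horder, finrank_adjoin hα])
  have hmem (τ : Gal(ℚ⟮α⟯/ℚ)) : τ ∈ Subgroup.zpowers σ := htop ▸ Subgroup.mem_top τ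
  refine ⟨σ, hσ.trans (rotate_eq_neg_one_div hg), hσ, horder, ⟨σ, hmem⟩, ?_, hmem⟩
  rw [← horder, ← Nat.card_zpowers, htop]
  exact Subgroup.card_top.symm
end

section
/- Let α be a root of X³ − 3X − 1. Then for all rational numbers P and R, the norm from ℚ(α) to ℚ of P² + (−5 + α + α²)·R² equals P⁶ − 9P⁴R² + 18P²R⁴ + 9R⁶. -/
/-!
A rational root of `X³ - 3X - 1` would be an integer dividing `1`, and `±1` are not roots, so this
cubic is irreducible and is the minimal polynomial of `α`; hence `1, α, α²` is a `ℚ`-basis of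
`ℚ(α)`. Using `α³ = 3α + 1`, multiplication by `c₀ + c₁α + c₂α²` has an explicit `3 × 3` matrix
in this basis, and the norm is its determinant, here with `c₀ = P² - 5R²` and `c₁ = c₂ = R²`.
-/

open IntermediateField Polynomial

theorem Algebra.norm_eq_det_of_mul_basis {K L ι : Type*} [CommRing K] [CommRing L] [Algebra K L]
    [Fintype ι] [DecidableEq ι] (B : Module.Basis ι K L) (x : L) (M : Matrix ι ι K)
    (hM : ∀ j, x * B j = ∑ i, M i j • B i) :
    Algebra.norm K x = M.det := by
  rw [Algebra.norm_eq_matrix_det B]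
  congr 1
  ext i j
  rw [Algebra.leftMulMatrix_eq_repr_mul, hM, Module.Basis.repr_sum_self]

theorem PowerBasis.norm_eq_det_of_dim_eq_three {K L : Type*} [CommRing K] [CommRing L]
    [Algebra K L] (pb : PowerBasis K L) (hdim : pb.dim = 3) {p q : K}
    (hgen : pb.gen ^ 3 = algebraMap K L p * pb.gen + algebraMap K L q) (c₀ c₁ c₂ : K) :
    Algebra.norm K
        (algebraMap K L c₀ + algebraMap K L c₁ * pb.gen + algebraMap K L c₂ * pb.gen ^ 2) =
      !![c₀, c₂ * q, c₁ * q;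
         c₁, c₀ + c₂ * p, c₁ * p + c₂ * q;
         c₂, c₁, c₀ + c₂ * p].det := by
  set B := pb.basis.reindex (finCongr hdim)
  have hB : ∀ j : Fin 3, B j = pb.gen ^ (j : ℕ) := fun j => by simp [B]
  refine Algebra.norm_eq_det_of_mul_basis B _ _ fun j => ?_
  fin_cases j <;>
    simp only [Fin.zero_eta, Fin.mk_one, Fin.reduceFinMk, Fin.isValue, Fin.coe_ofNat_eq_mod,
      Nat.zero_mod, Nat.one_mod, Nat.mod_succ, hB, pow_zero, pow_one, mul_one, Matrix.of_apply,
      Matrix.cons_val', Matrix.cons_val, Matrix.cons_val_zero, Matrix.cons_val_one,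
      Matrix.cons_val_fin_one, Algebra.smul_def, Fin.sum_univ_three, map_add, map_mul]
  -- the column `j = 0` is closed by `simp`; the other two reduce `gen ^ 3`, `gen ^ 4` by `hgen`
  · linear_combination algebraMap K L c₂ * hgen
  · linear_combination (algebraMap K L c₁ + algebraMap K L c₂ * pb.gen) * hgen

theorem Int.pow_three_sub_three_mul_sub_one_ne_zero (m : ℤ) : m ^ 3 - 3 * m - 1 ≠ 0 := by
  intro h
  have hunit : m * (m ^ 2 - 3) = 1 := by linear_combination h
  rcases Int.eq_one_or_neg_one_of_mul_eq_one hunit with rfl | rfl <;> norm_num at h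

theorem monic_X_pow_three_sub_three_mul_X_sub_one {R : Type*} [CommRing R] :
    (X ^ 3 - 3 * X - 1 : R[X]).Monic := by
  monicity!

theorem Rat.pow_three_sub_three_mul_sub_one_ne_zero (r : ℚ) : r ^ 3 - 3 * r - 1 ≠ 0 := by
  intro h
  obtain ⟨m, rfl, -⟩ := exists_integer_of_is_root_of_monic
    (monic_X_pow_three_sub_three_mul_X_sub_one (R := ℤ)) (r := r) (by simpa [map_ofNat] using h)
  exact Int.pow_three_sub_three_mul_sub_one_ne_zero m <| by
    simp only [algebraMap_int_eq, eq_intCast] at h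
    exact_mod_cast h

theorem irreducible_X_pow_three_sub_three_mul_X_sub_one :
    Irreducible (X ^ 3 - 3 * X - 1 : ℚ[X]) := by
  have hdeg : (X ^ 3 - 3 * X - 1 : ℚ[X]).natDegree = 3 := by compute_degree!
  rw [irreducible_iff_roots_eq_zero_of_degree_le_three (by omega) (by omega),
    Multiset.eq_zero_iff_forall_notMem]
  intro r hr
  rw [mem_roots monic_X_pow_three_sub_three_mul_X_sub_one.ne_zero, IsRoot] at hr
  exact Rat.pow_three_sub_three_mul_sub_one_ne_zero r (by simpa using hr)

theorem minpoly_eq_X_pow_three_sub_three_mul_X_sub_one {L : Type*} [Ring L] [Nontrivial L]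
    [Algebra ℚ L] {α : L} (hα : α ^ 3 - 3 * α - 1 = 0) :
    minpoly ℚ α = X ^ 3 - 3 * X - 1 :=
  (minpoly.eq_of_irreducible_of_monic irreducible_X_pow_three_sub_three_mul_X_sub_one
    (by simpa [map_ofNat] using hα) monic_X_pow_three_sub_three_mul_X_sub_one).symm

theorem IntermediateField.norm_adjoin_simple_eq_det {K L : Type*} [Field K] [Field L]
    [Algebra K L] {α : L} {p q : K} (hmin : minpoly K α = X ^ 3 - C p * X - C q) (c₀ c₁ c₂ : K) :
    Algebra.norm K (algebraMap K K⟮α⟯ c₀ + algebraMap K K⟮α⟯ c₁ * AdjoinSimple.gen K α +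
        algebraMap K K⟮α⟯ c₂ * AdjoinSimple.gen K α ^ 2) =
      !![c₀, c₂ * q, c₁ * q;
         c₁, c₀ + c₂ * p, c₁ * p + c₂ * q;
         c₂, c₁, c₀ + c₂ * p].det := by
  have hmonic : (X ^ 3 - C p * X - C q).Monic := by monicity!
  have hint : IsIntegral K α := minpoly.ne_zero_iff.mp (hmin ▸ hmonic.ne_zero)
  have hdim : (adjoin.powerBasis hint).dim = 3 := by
    rw [adjoin.powerBasis_dim, hmin]
    compute_degree!
  have hgen : (adjoin.powerBasis hint).gen ^ 3 =
      algebraMap K K⟮α⟯ p * (adjoin.powerBasis hint).gen + algebraMap K K⟮α⟯ q := by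
    have hroot := aeval_gen_minpoly K α
    simp only [hmin, map_sub, map_pow, map_mul, aeval_X, aeval_C] at hroot
    rw [adjoin.powerBasis_gen]
    linear_combination hroot
  rw [← adjoin.powerBasis_gen hint]
  exact (adjoin.powerBasis hint).norm_eq_det_of_dim_eq_three hdim hgen c₀ c₁ c₂

theorem stmt_11 (α : ℝ) (hα : α ^ 3 - 3 * α - 1 = 0) (P R : ℚ) :
    Algebra.norm ℚ
        ((P : ℚ⟮α⟯) ^ 2 +
          (-5 + AdjoinSimple.gen ℚ α + (AdjoinSimple.gen ℚ α) ^ 2) * (R : ℚ⟮α⟯) ^ 2) =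
      P ^ 6 - 9 * P ^ 4 * R ^ 2 + 18 * P ^ 2 * R ^ 4 + 9 * R ^ 6 := by
  have hmin : minpoly ℚ α = X ^ 3 - C 3 * X - C 1 := by
    rw [minpoly_eq_X_pow_three_sub_three_mul_X_sub_one hα, C_1, C_ofNat]
  have hx :
      (P : ℚ⟮α⟯) ^ 2 + (-5 + AdjoinSimple.gen ℚ α + AdjoinSimple.gen ℚ α ^ 2) * (R : ℚ⟮α⟯) ^ 2 =
      algebraMap ℚ ℚ⟮α⟯ (P ^ 2 - 5 * R ^ 2) + algebraMap ℚ ℚ⟮α⟯ (R ^ 2) * AdjoinSimple.gen ℚ α +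
        algebraMap ℚ ℚ⟮α⟯ (R ^ 2) * AdjoinSimple.gen ℚ α ^ 2 := by
    simp only [eq_ratCast (algebraMap ℚ ℚ⟮α⟯)]
    push_cast
    ring
  rw [hx]
  refine (norm_adjoin_simple_eq_det hmin _ _ _).trans ?_
  simp only [Matrix.det_fin_three, Matrix.of_apply, Matrix.cons_val', Matrix.cons_val_zero,
    Matrix.cons_val_one, Matrix.cons_val, Matrix.cons_val_fin_one]
  ring
end

section
/- Let α be a root of X³ − 3X − 1 and L = ℚ(α). Then the ideal (3) of ℤ[α] equals (α − 1)³ up to units; i.e., 3 = u·(α−1)³ for some unit u of ℤ[α]. In particular 3 is totally ramified in L. -/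
open IntermediateField

theorem stmt_14 (α : ℝ) (hα : α ^ 3 - 3 * α - 1 = 0) :
    ∃ u u' : ℚ⟮α⟯,
      (∃ a b c : ℤ, u = (a : ℚ⟮α⟯) + b * AdjoinSimple.gen ℚ α +
          c * (AdjoinSimple.gen ℚ α) ^ 2) ∧
      (∃ a b c : ℤ, u' = (a : ℚ⟮α⟯) + b * AdjoinSimple.gen ℚ α +
          c * (AdjoinSimple.gen ℚ α) ^ 2) ∧
      u * u' = 1 ∧
      (3 : ℚ⟮α⟯) = u * (AdjoinSimple.gen ℚ α - 1) ^ 3 := by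
  set g : ℚ⟮α⟯ := AdjoinSimple.gen ℚ α with hgdef
  have hg : g ^ 3 - 3 * g - 1 = 0 := by
    apply Subtype.ext
    push_cast
    rw [hgdef, AdjoinSimple.coe_gen]
    exact hα
  refine ⟨-1 + g + g ^ 2, 2 * g - g ^ 2, ⟨-1, 1, 1, by push_cast; ring⟩,
    ⟨0, 2, -1, by push_cast; ring⟩, ?_, ?_⟩
  · linear_combination (1 - g) * hg
  · linear_combination (-(g ^ 2) + 2 * g - 2) * hg
end

section
/- In the field K = ℚ(√3), if u is a rational number and γ ∈ ℤ[√3], and ε is a unit of ℤ[√3] of norm +1 such that (u² − 1) + u²·√3 = ε·√3·γ², then ε ≠ 2 + √3 (i.e., the case ε = 2 + √3 is impossible); equivalently, the equation (u² − 1) + u²√3 = (2+√3)·√3·γ² has no solution with u rational and γ ∈ ℤ[√3]. -/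
theorem stmt_17 :
    ¬ ∃ (u : ℚ) (a b : ℤ),
      ((u : ℝ) ^ 2 - 1) + (u : ℝ) ^ 2 * Real.sqrt 3 =
        (2 + Real.sqrt 3) * Real.sqrt 3 * ((a : ℝ) + (b : ℝ) * Real.sqrt 3) ^ 2 := by
  rintro ⟨u, a, b, h⟩
  have s3 : Real.sqrt 3 ^ 2 = 3 := Real.sq_sqrt (by norm_num)
  have irr : Irrational (Real.sqrt 3) := (Nat.prime_three).irrational_sqrt
  set P : ℚ := u ^ 2 - 1 - (3 * (a ^ 2 + 3 * b ^ 2) + 12 * (a * b)) with hP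
  set Q : ℚ := u ^ 2 - (2 * (a ^ 2 + 3 * b ^ 2) + 6 * (a * b)) with hQ
  have key : (P : ℝ) + (Q : ℝ) * Real.sqrt 3 = 0 := by
    rw [hP, hQ]
    push_cast
    linear_combination h + ((b:ℝ)^2 * Real.sqrt 3 ^ 2 + 2*((a:ℝ)*(b:ℝ) + (b:ℝ)^2) * Real.sqrt 3
      + (a:ℝ)^2 + 4*(a:ℝ)*(b:ℝ) + 3*(b:ℝ)^2) * s3
  have hQ0 : Q = 0 := by
    by_contra hq
    have : Real.sqrt 3 = ((-P / Q : ℚ) : ℝ) := by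
      push_cast
      field_simp
      linarith [key]
    exact irr ⟨-P / Q, this.symm⟩
  have hP0 : P = 0 := by
    rw [hQ0] at key
    simp at key
    exact_mod_cast key
  rw [hP] at hP0
  rw [hQ] at hQ0
  have hzq : (a : ℚ) ^ 2 + 6 * (a * b) + 3 * b ^ 2 = -1 := by
    linear_combination hQ0 - hP0
  have hz : (a ^ 2 + 6 * (a * b) + 3 * b ^ 2 : ℤ) = -1 := by exact_mod_cast hzq
  have h3 : ((a : ZMod 3)) ^ 2 = -1 := by
    have hc := congrArg (fun n : ℤ => (n : ZMod 3)) hz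
    push_cast at hc
    have h6 : (6 : ZMod 3) = 0 := by decide
    have h33 : (3 : ZMod 3) = 0 := by decide
    linear_combination hc - (a : ZMod 3) * (b : ZMod 3) * h6 - (b : ZMod 3) ^ 2 * h33
  have hall : ∀ x : ZMod 3, x ^ 2 ≠ -1 := by decide
  exact hall _ h3
end
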